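/- Let g be a set map with values in a field K of characteristic zero, and let a be a K-sequence with a_0 = g_∅ and a_1 ≠ 0. Then there exists a unique K-set map h with h_∅ = 0 such that a ∘ h = g. -/

import Mathlib

open scoped Classical

noncomputable section

/-- The set of set partitions of a finite set `S`. -/
def partitions {V : Type*} [DecidableEq V] (S : Finset V) :
    Finset (Finset (Finset V)) :=
  S.powerset.powerset.filter
    (fun P => (∀ T ∈ P, T ≠ ∅) ∧ P.sup id = S ∧
      ∀ T ∈ P, ∀ U ∈ P, T ≠ U → Disjoint T U)

/-- Composition of a sequence with a set map:
`(a ∘ h)_S = ∑_{σ ⊢ S} a_{ℓ(σ)} ∏_{T ∈ σ} h_T`. -/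
def setComp {V R : Type*} [DecidableEq V] [CommRing R] (a : ℕ → R)
    (h : Finset V → R) : Finset V → R :=
  fun S => ∑ P ∈ partitions S, a P.card * ∏ T ∈ P, h T

/-!
Split off the one-block partition `{S}` from the sum defining `(a ∘ h)_S`: for `S ≠ ∅`,
`(a ∘ h)_S = a₁ h_S + (terms involving only h_T for T ⊂ S)`. Since `a₁` is invertible, the equation
`(a ∘ h)_S = g_S` determines `h_S` from the values of `h` on proper subsets, so `h` is
constructed, and forced, by strong induction on `S`; at `S = ∅` the equation reads `a₀ = g_∅`.
-/

section SetPartitions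

variable {V : Type*} [DecidableEq V]

lemma mem_partitions {S : Finset V} {P : Finset (Finset V)} :
    P ∈ partitions S ↔ (∀ T ∈ P, T ⊆ S) ∧ (∀ T ∈ P, T ≠ ∅) ∧ P.sup id = S ∧
      ∀ T ∈ P, ∀ U ∈ P, T ≠ U → Disjoint T U := by
  simp only [partitions, Finset.mem_filter, Finset.mem_powerset, Finset.subset_iff (s₁ := P)]

lemma partitions_empty : partitions (∅ : Finset V) = {∅} := by
  ext P
  rw [mem_partitions, Finset.mem_singleton]
  constructor
  · rintro ⟨h_sub, h_ne, -, -⟩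
    exact Finset.eq_empty_of_forall_notMem fun T hT =>
      h_ne T hT (Finset.subset_empty.mp (h_sub T hT))
  · rintro rfl
    simp

lemma singleton_mem_partitions {S : Finset V} (hS : S ≠ ∅) : {S} ∈ partitions S := by
  rw [mem_partitions]
  refine ⟨?_, ?_, ?_, ?_⟩ <;> simp [hS]

lemma eq_singleton_of_self_mem_partitions {S : Finset V} {P : Finset (Finset V)}
    (hP : P ∈ partitions S) (hSP : S ∈ P) : P = {S} := by
  obtain ⟨h_sub, h_ne, -, h_disj⟩ := mem_partitions.mp hP
  refine Finset.eq_singleton_iff_unique_mem.mpr ⟨hSP, fun U hU => ?_⟩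
  by_contra hUS
  refine h_ne U hU (Finset.eq_empty_of_forall_notMem fun x hx => ?_)
  exact Finset.disjoint_left.mp (h_disj U hU S hSP hUS) hx (h_sub U hU hx)

def properPartitions (S : Finset V) : Finset (Finset (Finset V)) :=
  (partitions S).filter (fun P => S ∉ P)

lemma ssubset_of_mem_properPartitions {S T : Finset V} {P : Finset (Finset V)}
    (hP : P ∈ properPartitions S) (hT : T ∈ P) : T ⊂ S := by
  obtain ⟨hP, hSP⟩ := Finset.mem_filter.mp hP
  refine (mem_partitions.mp hP).1 T hT |>.ssubset_of_ne ?_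
  rintro rfl
  exact hSP hT

lemma partitions_filter_self_mem {S : Finset V} (hS : S ≠ ∅) :
    (partitions S).filter (fun P => S ∈ P) = {{S}} := by
  ext P
  rw [Finset.mem_filter, Finset.mem_singleton]
  constructor
  · rintro ⟨hP, hSP⟩
    exact eq_singleton_of_self_mem_partitions hP hSP
  · rintro rfl
    exact ⟨singleton_mem_partitions hS, Finset.mem_singleton_self S⟩

lemma properPartitions_empty : properPartitions (∅ : Finset V) = {∅} := by
  rw [properPartitions, partitions_empty, Finset.filter_singleton,
    if_pos (Finset.notMem_empty _)]

section CommRing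

variable {R : Type*} [CommRing R]

lemma setComp_empty (a : ℕ → R) (h : Finset V → R) : setComp a h ∅ = a 0 := by
  simp [setComp, partitions_empty]

lemma setComp_eq_mul_add (a : ℕ → R) (h : Finset V → R) {S : Finset V} (hS : S ≠ ∅) :
    setComp a h S = a 1 * h S + ∑ P ∈ properPartitions S, a P.card * ∏ T ∈ P, h T := by
  rw [setComp, properPartitions, ← Finset.sum_filter_add_sum_filter_not (partitions S)
    (fun P => S ∈ P), partitions_filter_self_mem hS]
  simp

lemma eq_of_setComp_eq {a : ℕ → R} (ha1 : IsLeftRegular (a 1)) {h h' : Finset V → R}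
    (h0 : h ∅ = h' ∅) (hcomp : setComp a h = setComp a h') : h = h' := by
  funext S
  induction S using Finset.strongInduction with
  | H S ih =>
    rcases eq_or_ne S ∅ with rfl | hS
    · exact h0
    have hS' := congr_fun hcomp S
    rw [setComp_eq_mul_add a h hS, setComp_eq_mul_add a h' hS] at hS'
    have h_rest : ∑ P ∈ properPartitions S, a P.card * ∏ T ∈ P, h T
        = ∑ P ∈ properPartitions S, a P.card * ∏ T ∈ P, h' T :=
      Finset.sum_congr rfl fun P hP => congrArg (a P.card * ·) <|
        Finset.prod_congr rfl fun T hT => ih T (ssubset_of_mem_properPartitions hP hT)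
    exact ha1 (add_right_cancel (h_rest ▸ hS'))

end CommRing

section Field

variable {K : Type*} [Field K]

def setCompInv (g : Finset V → K) (a : ℕ → K) : Finset V → K :=
  fun S => Finset.strongInduction (fun S ih =>
    (g S - ∑ P ∈ properPartitions S, a P.card * ∏ T ∈ P.attach,
        (if hT : (T : Finset V) ⊂ S then ih T hT else 0)) / a 1) S

lemma setCompInv_eq (g : Finset V → K) (a : ℕ → K) (S : Finset V) :
    setCompInv g a S =
      (g S - ∑ P ∈ properPartitions S, a P.card * ∏ T ∈ P, setCompInv g a T) / a 1 := by
  rw [setCompInv, Finset.strongInduction_eq]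
  congr 2
  refine Finset.sum_congr rfl fun P hP => congrArg (a P.card * ·) ?_
  rw [← Finset.prod_attach P]
  exact Finset.prod_congr rfl fun T _ =>
    dif_pos (ssubset_of_mem_properPartitions hP T.2)

lemma setCompInv_empty (g : Finset V → K) (a : ℕ → K) (ha0 : a 0 = g ∅) :
    setCompInv g a ∅ = 0 := by
  simp [setCompInv_eq g a ∅, properPartitions_empty, ← ha0]

lemma setComp_setCompInv (g : Finset V → K) (a : ℕ → K) (ha0 : a 0 = g ∅) (ha1 : a 1 ≠ 0) :
    setComp a (setCompInv g a) = g := by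
  funext S
  rcases eq_or_ne S ∅ with rfl | hS
  · rw [setComp_empty, ha0]
  · rw [setComp_eq_mul_add a _ hS, setCompInv_eq g a S, mul_div_cancel₀ _ ha1]
    ring

end Field

end SetPartitions

theorem exists_unique_setComp_eq_general {V K : Type*} [DecidableEq V] [Field K]
    (g : Finset V → K) (a : ℕ → K) (ha0 : a 0 = g ∅) (ha1 : a 1 ≠ 0) :
    ∃! h : Finset V → K, h ∅ = 0 ∧ setComp a h = g := by
  refine ⟨setCompInv g a, ⟨setCompInv_empty g a ha0, setComp_setCompInv g a ha0 ha1⟩, ?_⟩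
  rintro h ⟨h0, hcomp⟩
  refine eq_of_setComp_eq (IsRegular.of_ne_zero ha1).left ?_ ?_
  · rw [h0, setCompInv_empty g a ha0]
  · rw [hcomp, setComp_setCompInv g a ha0 ha1]

/-- If `a_0 = g_∅` and `a_1 ≠ 0`, there is a unique set map `h` with
`h_∅ = 0` and `a ∘ h = g`. -/
theorem exists_unique_setComp_eq {V K : Type*} [DecidableEq V] [Field K] [CharZero K]
    (g : Finset V → K) (a : ℕ → K) (ha0 : a 0 = g ∅) (ha1 : a 1 ≠ 0) :
    ∃! h : Finset V → K, h ∅ = 0 ∧ setComp a h = g :=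
  exists_unique_setComp_eq_general g a ha0 ha1
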